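/- For any x, y ∈ ℂ^d, ‖x·x* − y·y*‖_F ≥ (√2/4)·(‖x‖₂ + ‖y‖₂)·inf over θ ∈ [0, 2π) of ‖x − exp(iθ)·y‖₂. Equivalently, choosing θ₀ with ⟨x, exp(iθ₀)·y⟩ real and nonnegative, ‖x·x* − y·y*‖_F² ≥ (1/8)·(‖x‖₂ + ‖y‖₂)²·‖x − exp(iθ₀)·y‖₂². -/

import Mathlib

open MeasureTheory ProbabilityTheory Complex Finset
open scoped Real ComplexInnerProductSpace

noncomputable section

/-- `‖X‖_{ψ₂} ≤ K`: all moments are finite and `(𝔼|X|^p)^{1/p} ≤ √p · K` for `p ≥ 1`. -/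
def PsiTwoLe {Ω : Type*} [MeasurableSpace Ω] (μ : Measure Ω) (X : Ω → ℂ) (K : ℝ) : Prop :=
  ∀ p : ℝ, 1 ≤ p → Integrable (fun ω => ‖X ω‖ ^ p) μ ∧
    (∫ ω, ‖X ω‖ ^ p ∂μ) ^ (1 / p) ≤ Real.sqrt p * K

/-- The standing assumptions on the complex sub-Gaussian variable `ξ = ξ₁ + ξ₂ i`. -/
structure StdSubgaussian {Ω : Type*} [MeasurableSpace Ω] (μ : Measure Ω)
    (ξ : Ω → ℂ) (Cψ γ : ℝ) : Prop where
  meas : Measurable ξ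
  psi2 : PsiTwoLe μ ξ Cψ
  mean_zero : ∫ ω, ξ ω ∂μ = 0
  sq_zero : ∫ ω, ξ ω ^ 2 ∂μ = 0
  absSq_one : ∫ ω, ‖ξ ω‖ ^ 2 ∂μ = 1
  abs4_eq : ∫ ω, ‖ξ ω‖ ^ 4 ∂μ = γ
  indep_re_im : IndepFun (fun ω => (ξ ω).re) (fun ω => (ξ ω).im) μ
  ident_re_im : Measure.map (fun ω => (ξ ω).re) μ = Measure.map (fun ω => (ξ ω).im) μ

/-- The entries of the random measurement vectors `a j` are i.i.d. copies of `ξ`. -/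
def IIDEntries {Ω : Type*} [MeasurableSpace Ω] (μ : Measure Ω) {d m : ℕ}
    (a : Fin m → Ω → EuclideanSpace ℂ (Fin d)) (ξ : Ω → ℂ) : Prop :=
  (∀ (j : Fin m) (l : Fin d), Measurable fun ω => a j ω l) ∧
  iIndepFun (fun (p : Fin m × Fin d) ω => a p.1 ω p.2) μ ∧
  ∀ (j : Fin m) (l : Fin d), Measure.map (fun ω => a j ω l) μ = Measure.map ξ μ

/-- The entries of a single random vector `a` are i.i.d. copies of `ξ`. -/
def IIDEntriesVec {Ω : Type*} [MeasurableSpace Ω] (μ : Measure Ω) {d : ℕ}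
    (a : Ω → EuclideanSpace ℂ (Fin d)) (ξ : Ω → ℂ) : Prop :=
  (∀ l : Fin d, Measurable fun ω => a ω l) ∧
  iIndepFun (fun (l : Fin d) ω => a ω l) μ ∧
  ∀ l : Fin d, Measure.map (fun ω => a ω l) μ = Measure.map ξ μ

/-- Euclidean norm of a real vector. -/
def l2 {m : ℕ} (η : Fin m → ℝ) : ℝ := Real.sqrt (∑ j, η j ^ 2)

/-- The amplitude-based loss `∑ (|⟨a_j, x⟩| − b_j)²`. -/
def ampLoss {d m : ℕ} (a : Fin m → EuclideanSpace ℂ (Fin d)) (b : Fin m → ℝ)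
    (x : EuclideanSpace ℂ (Fin d)) : ℝ :=
  ∑ j, (‖⟪a j, x⟫‖ - b j) ^ 2

/-- `xhat` is a (global) minimizer of the amplitude-based model. -/
def IsAmpMinimizer {d m : ℕ} (a : Fin m → EuclideanSpace ℂ (Fin d)) (b : Fin m → ℝ)
    (xhat : EuclideanSpace ℂ (Fin d)) : Prop :=
  ∀ x, ampLoss a b xhat ≤ ampLoss a b x

/-- `xhat` is a minimizer of the constrained ℓ₁ model with tolerance `ε`. -/
def IsL1Minimizer {d m : ℕ} (a : Fin m → EuclideanSpace ℂ (Fin d)) (b : Fin m → ℝ)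
    (ε : ℝ) (xhat : EuclideanSpace ℂ (Fin d)) : Prop :=
  Real.sqrt (ampLoss a b xhat) ≤ ε ∧
  ∀ x, Real.sqrt (ampLoss a b x) ≤ ε →
    (∑ l, ‖xhat l‖) ≤ ∑ l, ‖x l‖

/-- Frobenius norm of a complex matrix. -/
def frobNorm {d : ℕ} (X : Matrix (Fin d) (Fin d) ℂ) : ℝ :=
  Real.sqrt (∑ i, ∑ j, ‖X i j‖ ^ 2)

/-- The quadratic form `a* X a`. -/
def quadForm {d : ℕ} (a : EuclideanSpace ℂ (Fin d)) (X : Matrix (Fin d) (Fin d) ℂ) : ℂ :=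
  dotProduct (fun i => (starRingEnd ℂ) (a i)) (X.mulVec fun i => a i)

/-- The rank-one matrix `x x*`. -/
def outerProd {d : ℕ} (x : EuclideanSpace ℂ (Fin d)) : Matrix (Fin d) (Fin d) ℂ :=
  Matrix.of fun j l => x j * (starRingEnd ℂ) (x l)

end

/-! With `a = ‖x‖`, `b = ‖y‖` and `t = |⟪x, y⟫|`, the Frobenius norm satisfies
`‖x x* - y y*‖_F² = a⁴ + b⁴ - 2t²`, and for any phase making `⟪x, e^{iθ} y⟫` real and nonnegative,
`‖x - e^{iθ} y‖² = a² + b² - 2t`; such a phase exists in `[0, 2π)` and bounds the infimum. Both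
claims thus reduce to a polynomial inequality for `0 ≤ t ≤ ab`, which holds even with `1/4` in
place of `1/8`. -/

open scoped ComplexConjugate

lemma frobNorm_sq {d : ℕ} (X : Matrix (Fin d) (Fin d) ℂ) :
    frobNorm X ^ 2 = ∑ i, ∑ j, ‖X i j‖ ^ 2 :=
  Real.sq_sqrt (by positivity)

lemma frobNorm_outerProd_sub_sq {d : ℕ} (x y : EuclideanSpace ℂ (Fin d)) :
    frobNorm (outerProd x - outerProd y) ^ 2 = ‖x‖ ^ 4 + ‖y‖ ^ 4 - 2 * ‖⟪x, y⟫‖ ^ 2 := by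
  set p : Fin d → ℂ := fun i => x i * conj (y i)
  have hp : ∑ i, p i = conj ⟪x, y⟫ := by
    simp [p, PiLp.inner_apply, mul_comm]
  have entry : ∀ i j, ‖x i * conj (x j) - y i * conj (y j)‖ ^ 2 =
      ‖x i‖ ^ 2 * ‖x j‖ ^ 2 + ‖y i‖ ^ 2 * ‖y j‖ ^ 2 - 2 * (p i * conj (p j)).re := by
    intro i j
    simp only [← Complex.normSq_eq_norm_sq, Complex.normSq_sub, map_mul, Complex.normSq_conj, p,
      Complex.conj_conj, mul_mul_mul_comm]
  have norm_pow_four (z : EuclideanSpace ℂ (Fin d)) : ‖z‖ ^ 4 = ∑ i, ∑ j, ‖z i‖ ^ 2 * ‖z j‖ ^ 2 := by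
    rw [show 4 = 2 * 2 from rfl, pow_mul, EuclideanSpace.norm_sq_eq, sq, sum_mul_sum]
  have cross : ∑ i, ∑ j, (p i * conj (p j)).re = ‖⟪x, y⟫‖ ^ 2 := by
    simp only [← Complex.re_sum, ← sum_mul_sum, ← map_sum, hp, Complex.conj_conj, Complex.conj_mul',
      ← Complex.ofReal_pow, Complex.ofReal_re]
  simp only [frobNorm_sq, outerProd, Matrix.sub_apply, Matrix.of_apply, entry, sum_sub_distrib,
    sum_add_distrib, ← mul_sum, norm_pow_four, cross]

-- With `s = a² + b² - 2t ≥ (a - b)²`, one has `a⁴ + b⁴ - 2t² = s (a² + b² + 2t) / 2 + (a² - b²)² / 2`.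
lemma add_sq_mul_le_of_le_mul {a b t : ℝ} (ht₀ : 0 ≤ t) (ht : t ≤ a * b) :
    (a + b) ^ 2 * (a ^ 2 + b ^ 2 - 2 * t) / 4 ≤ a ^ 4 + b ^ 4 - 2 * t ^ 2 := by
  have hs : 0 ≤ a ^ 2 + b ^ 2 - 2 * t := by nlinarith [sq_nonneg (a - b)]
  nlinarith [mul_nonneg hs (add_nonneg (sq_nonneg (a - b)) ht₀), sq_nonneg (a ^ 2 - b ^ 2)]

section InnerProductSpace

variable {E : Type*} [NormedAddCommGroup E] [InnerProductSpace ℂ E] {x y : E} {u : ℂ} {t : ℝ}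

lemma norm_sub_smul_sq_of_inner_eq_ofReal (hu : ‖u‖ = 1) (ht : ⟪x, u • y⟫ = t) :
    ‖x - u • y‖ ^ 2 = ‖x‖ ^ 2 + ‖y‖ ^ 2 - 2 * t := by
  rw [@norm_sub_sq ℂ, ht, norm_smul, hu, one_mul, RCLike.re_to_complex, Complex.ofReal_re]
  ring

lemma norm_inner_eq_abs_of_inner_smul_eq_ofReal (hu : ‖u‖ = 1) (ht : ⟪x, u • y⟫ = t) :
    ‖⟪x, y⟫‖ = |t| := by
  simpa [inner_smul_right, hu] using congrArg norm ht

end InnerProductSpace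

lemma Complex.exists_mem_Ico_exp_mul_I_mul_eq_norm (c : ℂ) :
    ∃ θ ∈ Set.Ico 0 (2 * π), exp (θ * I) * c = ‖c‖ := by
  have hper : Function.Periodic (fun θ : ℝ => exp (θ * I)) (2 * π) := fun θ => by
    push_cast
    exact exp_mul_I_periodic θ
  obtain ⟨θ, hθ, he⟩ := hper.exists_mem_Ico₀ Real.two_pi_pos (-c.arg)
  refine ⟨θ, hθ, ?_⟩
  conv_lhs => rw [← he, ← norm_mul_exp_arg_mul_I c]
  rw [mul_left_comm, ← exp_add]
  push_cast
  simp

lemma mul_norm_sub_smul_sq_le_frobNorm_sq {d : ℕ} (x y : EuclideanSpace ℂ (Fin d)) {u : ℂ}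
    (hu : ‖u‖ = 1) {t : ℝ} (ht : ⟪x, u • y⟫ = t) (ht₀ : 0 ≤ t) :
    (‖x‖ + ‖y‖) ^ 2 * ‖x - u • y‖ ^ 2 / 4 ≤ frobNorm (outerProd x - outerProd y) ^ 2 := by
  have hxy := norm_inner_eq_abs_of_inner_smul_eq_ofReal hu ht
  rw [abs_of_nonneg ht₀] at hxy
  rw [frobNorm_outerProd_sub_sq, hxy, norm_sub_smul_sq_of_inner_eq_ofReal hu ht]
  exact add_sq_mul_le_of_le_mul ht₀ (hxy ▸ norm_inner_le_norm x y)

lemma mul_norm_sub_smul_le_frobNorm {d : ℕ} (x y : EuclideanSpace ℂ (Fin d)) {u : ℂ}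
    (hu : ‖u‖ = 1) {t : ℝ} (ht : ⟪x, u • y⟫ = t) (ht₀ : 0 ≤ t) :
    (‖x‖ + ‖y‖) * ‖x - u • y‖ / 2 ≤ frobNorm (outerProd x - outerProd y) := by
  refine le_of_pow_le_pow_left₀ two_ne_zero (Real.sqrt_nonneg _) ?_
  calc ((‖x‖ + ‖y‖) * ‖x - u • y‖ / 2) ^ 2 = (‖x‖ + ‖y‖) ^ 2 * ‖x - u • y‖ ^ 2 / 4 := by ring
    _ ≤ _ := mul_norm_sub_smul_sq_le_frobNorm_sq x y hu ht ht₀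

/-- `‖x x* − y y*‖_F ≥ (√2/4)(‖x‖+‖y‖) · inf_θ ‖x − e^{iθ} y‖`, and the
equivalent squared form for an optimally aligned phase `θ₀`. -/
theorem statement15 {d : ℕ} (x y : EuclideanSpace ℂ (Fin d)) :
    (Real.sqrt 2 / 4) * (‖x‖ + ‖y‖) *
        (⨅ θ : Set.Ico (0:ℝ) (2 * π), ‖x - Complex.exp ((θ:ℝ) * Complex.I) • y‖) ≤
      frobNorm (outerProd x - outerProd y) ∧
    ∀ θ₀ : ℝ,
      (⟪x, Complex.exp (θ₀ * Complex.I) • y⟫ : ℂ).im = 0 →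
      0 ≤ (⟪x, Complex.exp (θ₀ * Complex.I) • y⟫ : ℂ).re →
      (1 / 8) * (‖x‖ + ‖y‖) ^ 2 * ‖x - Complex.exp (θ₀ * Complex.I) • y‖ ^ 2 ≤
        frobNorm (outerProd x - outerProd y) ^ 2 := by
  refine ⟨?_, fun θ₀ him hre => ?_⟩
  · obtain ⟨θ, hθ, hθc⟩ := exists_mem_Ico_exp_mul_I_mul_eq_norm ⟪x, y⟫
    have ht : ⟪x, exp (θ * I) • y⟫ = (‖⟪x, y⟫‖ : ℂ) := by rw [inner_smul_right, hθc]
    have hinf : (⨅ θ : Set.Ico (0:ℝ) (2 * π), ‖x - exp ((θ:ℝ) * I) • y‖) ≤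
        ‖x - exp (θ * I) • y‖ :=
      ciInf_le ⟨0, Set.forall_mem_range.2 fun _ => norm_nonneg _⟩ (⟨θ, hθ⟩ : Set.Ico (0:ℝ) (2 * π))
    have hsqrt : Real.sqrt 2 / 4 ≤ 1 / 2 := by
      nlinarith [Real.sq_sqrt (zero_le_two (α := ℝ)), Real.sqrt_nonneg 2]
    calc Real.sqrt 2 / 4 * (‖x‖ + ‖y‖) * (⨅ θ : Set.Ico (0:ℝ) (2 * π), ‖x - exp ((θ:ℝ) * I) • y‖)
        ≤ 1 / 2 * (‖x‖ + ‖y‖) * ‖x - exp (θ * I) • y‖ := by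
          gcongr
          exact Real.iInf_nonneg fun θ => norm_nonneg (x - exp ((θ:ℝ) * I) • y)
      _ = (‖x‖ + ‖y‖) * ‖x - exp (θ * I) • y‖ / 2 := by ring
      _ ≤ _ := mul_norm_sub_smul_le_frobNorm x y (norm_exp_ofReal_mul_I θ) ht (norm_nonneg _)
  · have ht : ⟪x, exp (θ₀ * I) • y⟫ = ((⟪x, exp (θ₀ * I) • y⟫).re : ℂ) := Complex.ext rfl him
    calc 1 / 8 * (‖x‖ + ‖y‖) ^ 2 * ‖x - exp (θ₀ * I) • y‖ ^ 2
        ≤ (‖x‖ + ‖y‖) ^ 2 * ‖x - exp (θ₀ * I) • y‖ ^ 2 / 4 := by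
          have : 0 ≤ (‖x‖ + ‖y‖) ^ 2 * ‖x - exp (θ₀ * I) • y‖ ^ 2 := by positivity
          linarith
      _ ≤ _ := mul_norm_sub_smul_sq_le_frobNorm_sq x y (norm_exp_ofReal_mul_I θ₀) ht hre
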